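/- arXiv:1910.05967 — 2 statements merged into one kernel-verified Lean document; each statement's English description precedes it below -/
import Mathlib

section
/- Sherman–Morrison step for the SINR maximum: let A be an n×n Hermitian positive definite complex matrix, u ∈ ℂⁿ, and c ≥ 0 a real number. Set x = c · u^H (A + c u u^H)⁻¹ u. Then 0 ≤ x < 1 and x/(1 − x) = c · u^H A⁻¹ u. -/
open Matrix BigOperators
open scoped ComplexOrder

/-!
With `q = uᴴ A⁻¹ u`, the matrix `B = A + c u uᴴ` sends `A⁻¹ u` to `(1 + c q) u`, so
`(1 + c q) · uᴴ B⁻¹ u = q` (Sherman–Morrison). Both quadratic forms are real and nonnegative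
because `A` and `B` are positive definite, hence `x = s / (1 + s)` with `s = c q ≥ 0`, from which
`0 ≤ x < 1` and `x / (1 - x) = s`.
-/

namespace Matrix

variable {n R : Type*} [Fintype n] [CommRing R]

section Invertible

variable [DecidableEq n]

theorem add_smul_vecMulVec_mulVec_inv_mulVec {A : Matrix n n R} (hA : IsUnit A.det) (c : R)
    (u v : n → R) :
    (A + c • vecMulVec u v) *ᵥ (A⁻¹ *ᵥ u) = (1 + c * (v ⬝ᵥ (A⁻¹ *ᵥ u))) • u := by
  rw [add_mulVec, smul_mulVec, vecMulVec_mulVec, mulVec_mulVec, mul_nonsing_inv _ hA, one_mulVec,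
    op_smul_eq_smul, smul_smul, add_smul, one_smul]

theorem one_add_mul_dotProduct_inv_add_smul_vecMulVec_mulVec {A : Matrix n n R}
    (hA : IsUnit A.det) (c : R) (u v : n → R) (hB : IsUnit (A + c • vecMulVec u v).det) :
    (1 + c * (v ⬝ᵥ (A⁻¹ *ᵥ u))) * (v ⬝ᵥ ((A + c • vecMulVec u v)⁻¹ *ᵥ u)) =
      v ⬝ᵥ (A⁻¹ *ᵥ u) := by
  rw [← smul_eq_mul, ← dotProduct_smul, ← mulVec_smul, ← add_smul_vecMulVec_mulVec_inv_mulVec hA,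
    mulVec_mulVec, nonsing_inv_mul _ hB, one_mulVec]

end Invertible

theorem PosDef.add_smul_vecMulVec_star [PartialOrder R] [StarRing R] [StarOrderedRing R]
    {A : Matrix n n R} (hA : A.PosDef) {c : R} (hc : 0 ≤ c) (u : n → R) :
    (A + c • vecMulVec u (star u)).PosDef :=
  hA.add_posSemidef ((posSemidef_vecMulVec_self_star u).smul hc)

end Matrix

theorem nonneg_lt_one_div_one_sub_eq_of_one_add_mul_eq {s x : ℝ} (hs : 0 ≤ s)
    (h : (1 + s) * x = s) : 0 ≤ x ∧ x < 1 ∧ x / (1 - x) = s := by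
  have hx : x = s / (1 + s) := by rw [eq_div_iff (by positivity)]; linarith
  subst hx
  refine ⟨by positivity, (div_lt_one (by positivity)).2 (by linarith), ?_⟩
  field_simp
  ring

/-- **Sherman–Morrison step for the SINR maximum.**
Let `A` be an `n × n` Hermitian positive definite complex matrix, `u ∈ ℂⁿ`, and
`c ≥ 0` a real number.  Set `x = c · uᴴ (A + c u uᴴ)⁻¹ u` (a real number,
expressed via the real part of the Hermitian quadratic form).  Then `0 ≤ x < 1`
and `x / (1 − x) = c · uᴴ A⁻¹ u`. -/
theorem stmt_4 {n : ℕ} (A : Matrix (Fin n) (Fin n) ℂ) (hA : A.PosDef)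
    (u : Fin n → ℂ) (c : ℝ) (hc : 0 ≤ c)
    (x : ℝ)
    (hx : x = c * (star u ⬝ᵥ ((A + (c : ℂ) • vecMulVec u (star u))⁻¹ *ᵥ u)).re) :
    0 ≤ x ∧ x < 1 ∧ x / (1 - x) = c * (star u ⬝ᵥ (A⁻¹ *ᵥ u)).re := by
  have hB := hA.add_smul_vecMulVec_star (Complex.zero_le_real.2 hc) u
  have key := one_add_mul_dotProduct_inv_add_smul_vecMulVec_mulVec
    ((isUnit_iff_isUnit_det _).mp hA.isUnit) (c : ℂ) u (star u)
    ((isUnit_iff_isUnit_det _).mp hB.isUnit)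
  set p := star u ⬝ᵥ ((A + (c : ℂ) • vecMulVec u (star u))⁻¹ *ᵥ u)
  set q := star u ⬝ᵥ (A⁻¹ *ᵥ u)
  have hp0 : 0 ≤ p := hB.inv.posSemidef.dotProduct_mulVec_nonneg u
  have hq0 : 0 ≤ q := hA.inv.posSemidef.dotProduct_mulVec_nonneg u
  have hp : p = p.re := Complex.eq_re_of_ofReal_le (r := 0) (by rwa [Complex.ofReal_zero])
  have hq : q = q.re := Complex.eq_re_of_ofReal_le (r := 0) (by rwa [Complex.ofReal_zero])
  rw [hp, hq] at key
  have key_re : (1 + c * q.re) * p.re = q.re := by exact_mod_cast key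
  apply nonneg_lt_one_div_one_sub_eq_of_one_add_mul_eq
    (mul_nonneg hc (Complex.nonneg_iff.1 hq0).1)
  rw [hx]
  linear_combination c * key_re
end

section
/- Statistical eigen hybrid beamforming matches fully digital beamforming (the paper's Theorem 2, exact-correlation version): suppose R̄ = Ũ Λ̃ Ũ^H with Ũ^H Ũ = I_{N_H}, and for each k suppose H_k^H H_k = Ũ_k Λ̃_k Ũ_k^H with Ũ_k^H Ũ_k = I_{N_H}, and let W_k = [Ũ_k V_k] be N×N unitary matrices with Ũ_k^H V_k = 0 and V_k^H V_k = I_{N−N_H}. Define the hybrid effective covariance R̂^HB = W^H R̄ W with W = [Ũ 0] ∈ ℂ^{N×N_RF} (zero columns appended), and the fully digital effective covariance R̂^FD = (1/K) Σ_{k=1}^{K} W_k^H H_k^H H_k W_k. If in addition (1/K) Σ_{k=1}^{K} Λ̃_k = Λ̃, then tr{ c R̂^HB (c' R̂^HB + ψ I_{N_RF})⁻¹ } = tr{ c R̂^FD (c' R̂^FD + ψ I_N)⁻¹ }, i.e., the hybrid scheme achieves the same average SINR as the fully digital scheme. -/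
open Matrix BigOperators

/-!
Conjugating `U Λ Uᴴ` by `[U V]` with `Uᴴ U = I` and `Uᴴ V = 0` gives the block-diagonal matrix
`diag(Λ, 0)`. Both the hybrid beamformer `[Ũ 0]` and each fully digital `W_k = [Ũ_k V_k]` are of
this form, so `R̂^HB = diag(Λ̃, 0)` and, averaging and using `(1/K) Σ Λ̃_k = Λ̃`, also
`R̂^FD = diag(Λ̃, 0)`. For a block-diagonal `diag(A, 0)` the trace `tr{c R (c' R + ψ I)⁻¹}` only
sees the block `A`, since the zero block contributes `c · 0 · ψ⁻¹ = 0`.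
-/

theorem Matrix.trace_fromBlocks {l n R : Type*} [Fintype l] [Fintype n] [AddCommMonoid R]
    (A : Matrix l l R) (B : Matrix l n R) (C : Matrix n l R) (D : Matrix n n R) :
    (fromBlocks A B C D).trace = A.trace + D.trace := by
  simp [Matrix.trace, Fintype.sum_sum_type]

theorem Matrix.conjTranspose_fromCols_mul_mul_fromCols {l m n R : Type*}
    [Fintype l] [Fintype m] [Fintype n] [DecidableEq l] [Semiring R] [StarRing R]
    {U : Matrix m l R} {V : Matrix m n R} (hUU : Uᴴ * U = 1) (hUV : Uᴴ * V = 0)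
    (Λ : Matrix l l R) :
    (fromCols U V)ᴴ * (U * Λ * Uᴴ) * fromCols U V = fromBlocks Λ 0 0 0 := by
  have hVU : Vᴴ * U = 0 := by simpa using congrArg conjTranspose hUV
  calc (fromCols U V)ᴴ * (U * Λ * Uᴴ) * fromCols U V
      = ((fromCols U V)ᴴ * U) * Λ * (Uᴴ * fromCols U V) := by simp only [Matrix.mul_assoc]
    _ = fromBlocks Λ 0 0 0 := by
      rw [conjTranspose_fromCols_eq_fromRows_conjTranspose, fromRows_mul, mul_fromCols, hUU, hUV,
        hVU, fromRows_mul, fromRows_mul_fromCols]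
      simp

/-- `tr{c R (c' R + ψ I)⁻¹}`, the paper's average SINR for the effective covariance `R`. -/
noncomputable def sinrTrace {n R : Type*} [Fintype n] [DecidableEq n] [CommRing R]
    (c c' ψ : R) (M : Matrix n n R) : R :=
  (c • M * (c' • M + ψ • 1)⁻¹).trace

theorem sinrTrace_fromBlocks_zero {l n R : Type*} [Fintype l] [Fintype n]
    [DecidableEq l] [DecidableEq n] [CommRing R] (c c' : R) {ψ : R} (hψ : IsUnit ψ)
    (A : Matrix l l R) :
    sinrTrace c c' ψ (fromBlocks A 0 0 (0 : Matrix n n R)) = sinrTrace c c' ψ A := by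
  have hsum : c' • fromBlocks A 0 0 (0 : Matrix n n R) + ψ • 1
      = fromBlocks (c' • A + ψ • 1) 0 0 (ψ • 1) := by
    rw [← fromBlocks_one, fromBlocks_smul, fromBlocks_smul, fromBlocks_add]
    simp
  have hD : IsUnit (ψ • (1 : Matrix n n R)) := by
    simpa [isUnit_iff_isUnit_det, det_smul] using hψ.pow (Fintype.card n)
  unfold sinrTrace
  rw [hsum, fromBlocks_smul]
  by_cases hA : IsUnit (c' • A + ψ • 1)
  · rw [inv_fromBlocks_zero₂₁_of_isUnit_iff _ _ _ (iff_of_true hA hD)]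
    simp [fromBlocks_multiply, trace_fromBlocks]
  · -- both inverses are the junk value `0`
    have hblk : ¬ IsUnit (fromBlocks (c' • A + ψ • 1) 0 0 (ψ • (1 : Matrix n n R))) := by
      rw [isUnit_fromBlocks_zero₂₁]
      tauto
    simp [nonsing_inv_eq_ringInverse, Ring.inverse_non_unit _ hblk, Ring.inverse_non_unit _ hA]

theorem stmt_6_general {K m N NH r s : ℕ}
    (H : Fin K → Matrix (Fin m) (Fin N) ℂ)
    (c c' ψ : ℝ) (hψ : 0 < ψ)
    (Rbar : Matrix (Fin N) (Fin N) ℂ)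
    (U : Matrix (Fin N) (Fin NH) ℂ) (Λ : Matrix (Fin NH) (Fin NH) ℂ)
    (hUU : Uᴴ * U = 1) (hR : Rbar = U * Λ * Uᴴ)
    (Uk : Fin K → Matrix (Fin N) (Fin NH) ℂ)
    (Λk : Fin K → Matrix (Fin NH) (Fin NH) ℂ)
    (Vk : Fin K → Matrix (Fin N) (Fin s) ℂ)
    (hUkUk : ∀ k, (Uk k)ᴴ * Uk k = 1)
    (hHk : ∀ k, (H k)ᴴ * H k = Uk k * Λk k * (Uk k)ᴴ)
    (hUkVk : ∀ k, (Uk k)ᴴ * Vk k = 0)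
    (hΛ : ((K : ℂ))⁻¹ • ∑ k, Λk k = Λ)
    (W : Matrix (Fin N) (Fin NH ⊕ Fin r) ℂ)
    (hW : W = fromCols U 0)
    (RHB : Matrix (Fin NH ⊕ Fin r) (Fin NH ⊕ Fin r) ℂ)
    (hRHB : RHB = Wᴴ * Rbar * W)
    (RFD : Matrix (Fin NH ⊕ Fin s) (Fin NH ⊕ Fin s) ℂ)
    (hRFD : RFD = ((K : ℂ))⁻¹ • ∑ k,
      (fromCols (Uk k) (Vk k))ᴴ * ((H k)ᴴ * H k) * fromCols (Uk k) (Vk k)) :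
    ((c : ℂ) • RHB * ((c' : ℂ) • RHB + (ψ : ℂ) • 1)⁻¹).trace
      = ((c : ℂ) • RFD * ((c' : ℂ) • RFD + (ψ : ℂ) • 1)⁻¹).trace := by
  have hψ' : IsUnit (ψ : ℂ) := isUnit_iff_ne_zero.mpr (by exact_mod_cast hψ.ne')
  have hRHB' : RHB = fromBlocks Λ 0 0 0 := by
    rw [hRHB, hW, hR, conjTranspose_fromCols_mul_mul_fromCols hUU (Matrix.mul_zero _)]
  have hRFD' : RFD = fromBlocks Λ 0 0 0 := by
    simp only [hRFD, hHk, conjTranspose_fromCols_mul_mul_fromCols (hUkUk _) (hUkVk _), ← hΛ]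
    ext (i | i) (j | j) <;> simp [Matrix.sum_apply]
  change sinrTrace _ _ _ RHB = sinrTrace _ _ _ RFD
  rw [hRHB', hRFD', sinrTrace_fromBlocks_zero _ _ hψ', sinrTrace_fromBlocks_zero _ _ hψ']

/-- **Theorem 2 of the paper (exact-correlation version):** statistical eigen hybrid
beamforming matches fully digital beamforming.

Setup: `K ≥ 1` subcarriers with `m × N` channel matrices `H_k`, average spatial
channel covariance `R̄ = (1/K) ∑_k H_kᴴ H_k`, numbers `N_H ≤ N_RF ≤ N` (here we
write `N_RF = N_H + r` and `N = N_H + s`), weights `c ≥ 0`, `c' ≥ 0`, noise `ψ > 0`.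

Suppose `R̄ = Ũ Λ̃ Ũᴴ` with `Ũᴴ Ũ = I_{N_H}`, for each `k` suppose
`H_kᴴ H_k = Ũ_k Λ̃_k Ũ_kᴴ` with `Ũ_kᴴ Ũ_k = I_{N_H}`, and let
`W_k = [Ũ_k V_k]` be `N × N` unitary matrices with `Ũ_kᴴ V_k = 0` and
`V_kᴴ V_k = I_{N−N_H}`.  Define the hybrid effective covariance
`R̂^HB = Wᴴ R̄ W` with `W = [Ũ 0] ∈ ℂ^{N×N_RF}` (zero columns appended), and the
fully digital effective covariance `R̂^FD = (1/K) ∑_k W_kᴴ H_kᴴ H_k W_k`.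
If in addition `(1/K) ∑_k Λ̃_k = Λ̃`, then
`tr{c R̂^HB (c' R̂^HB + ψ I_{N_RF})⁻¹} = tr{c R̂^FD (c' R̂^FD + ψ I_N)⁻¹}`,
i.e., the hybrid scheme achieves the same average SINR as the fully digital one. -/
theorem stmt_6 {K m N NH NRF r s : ℕ} (hK : 1 ≤ K)
    (hNRF : NH + r = NRF) (hN : NH + s = N) (hle : NRF ≤ N)
    (H : Fin K → Matrix (Fin m) (Fin N) ℂ)
    (c c' ψ : ℝ) (hc : 0 ≤ c) (hc' : 0 ≤ c') (hψ : 0 < ψ)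
    (Rbar : Matrix (Fin N) (Fin N) ℂ)
    (hRbar : Rbar = ((K : ℂ))⁻¹ • ∑ k, (H k)ᴴ * H k)
    (U : Matrix (Fin N) (Fin NH) ℂ) (Λ : Matrix (Fin NH) (Fin NH) ℂ)
    (hUU : Uᴴ * U = 1) (hR : Rbar = U * Λ * Uᴴ)
    (Uk : Fin K → Matrix (Fin N) (Fin NH) ℂ)
    (Λk : Fin K → Matrix (Fin NH) (Fin NH) ℂ)
    (Vk : Fin K → Matrix (Fin N) (Fin s) ℂ)
    (hUkUk : ∀ k, (Uk k)ᴴ * Uk k = 1)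
    (hHk : ∀ k, (H k)ᴴ * H k = Uk k * Λk k * (Uk k)ᴴ)
    (hUkVk : ∀ k, (Uk k)ᴴ * Vk k = 0)
    (hVkVk : ∀ k, (Vk k)ᴴ * Vk k = 1)
    (hWkUnitary : ∀ k, (fromCols (Uk k) (Vk k))ᴴ * fromCols (Uk k) (Vk k) = 1 ∧
      fromCols (Uk k) (Vk k) * (fromCols (Uk k) (Vk k))ᴴ = 1)
    (hΛ : ((K : ℂ))⁻¹ • ∑ k, Λk k = Λ)
    (W : Matrix (Fin N) (Fin NH ⊕ Fin r) ℂ)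
    (hW : W = fromCols U 0)
    (RHB : Matrix (Fin NH ⊕ Fin r) (Fin NH ⊕ Fin r) ℂ)
    (hRHB : RHB = Wᴴ * Rbar * W)
    (RFD : Matrix (Fin NH ⊕ Fin s) (Fin NH ⊕ Fin s) ℂ)
    (hRFD : RFD = ((K : ℂ))⁻¹ • ∑ k,
      (fromCols (Uk k) (Vk k))ᴴ * ((H k)ᴴ * H k) * fromCols (Uk k) (Vk k)) :
    ((c : ℂ) • RHB * ((c' : ℂ) • RHB + (ψ : ℂ) • 1)⁻¹).trace
      = ((c : ℂ) • RFD * ((c' : ℂ) • RFD + (ψ : ℂ) • 1)⁻¹).trace :=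
  stmt_6_general H c c' ψ hψ Rbar U Λ hUU hR Uk Λk Vk hUkUk hHk hUkVk hΛ W hW RHB hRHB RFD hRFD
end
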